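/- arXiv:2308.11815 — 4 statements merged into one kernel-verified Lean document; each statement's English description precedes it below -/
import Mathlib

section
/- The group C_3 × C_3 is not fully realizable: there is no ring R of characteristic 2, generated by its units, such that R^× ≅ C_3 × C_3 and every group endomorphism of R^× is induced by a ring endomorphism of R, under the classification that such R must be isomorphic to F_4 × F_4 or F_2 × F_4 × F_4. Concretely: for R = F_4 × F_4 and for R = F_2 × F_4 × F_4, the map End_Ring(R) → End_Group(R^×) is not surjective. -/
/-!
Over a field `K` with more than two elements, pick `ζ ≠ 0, -1`: then `1`, `(ζ, ζ)` and their
sum `(1 + ζ, 1 + ζ)` are units of `K × K`, so an additive map sending every unit to `1` would give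
`1 + 1 = 1`; hence the trivial endomorphism of `(K × K)ˣ` is not induced by a ring endomorphism.
On `A × K × K`, pick `ζ ≠ 0, 1` instead: the units satisfy
`(1, 1, 1) + (1, ζ, ζ) = (1, ζ, 1) + (1, 1, ζ)`, while the unit endomorphism
`(a, b, c) ↦ (1, b c, 1)` turns the middle coordinates into `1 + ζ² = 2 ζ`, i.e. `(ζ - 1)² = 0`.
Both apply to `K = 𝔽₄`.
-/

theorem MonoidHom.apply_of_units_map_eq {M N : Type*} [Monoid M] [Monoid N] {f : M →* N}
    {φ : Mˣ →* Nˣ} (h : Units.map f = φ) {r : M} (hr : IsUnit r) : f r = φ hr.unit := by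
  rw [← h]
  rfl

theorem RingHom.units_map_ne_one {R S : Type*} [Semiring R] [Ring S] [Nontrivial S]
    (f : R →+* S) {u : R} (hu : IsUnit u) (hu₁ : IsUnit (1 + u)) :
    Units.map (f : R →* S) ≠ 1 := by
  intro h
  have hf {r : R} (hr : IsUnit r) : f r = 1 := by
    simpa using MonoidHom.apply_of_units_map_eq h hr
  have h_one_add_one : (1 : S) + 1 = 1 :=
    calc (1 : S) + 1 = f 1 + f u := by rw [map_one, hf hu]
      _ = 1 := by rw [← map_add, hf hu₁]
  exact one_ne_zero (add_eq_left.1 h_one_add_one)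

/-- The endomorphism `(a, b, c) ↦ (1, b * c, 1)`. -/
def middleProduct (A K : Type*) [Monoid A] [CommMonoid K] : A × K × K →* A × K × K :=
  (1 : A × K × K →* A).prod ((mulMonoidHom.comp (MonoidHom.snd A (K × K))).prod 1)

theorem RingHom.units_map_ne_units_map_middleProduct {A K : Type*} [Semiring A] [CommRing K]
    [IsReduced K] (f : A × K × K →+* A × K × K) {ζ : K} (hζ : IsUnit ζ) (hζ₁ : ζ ≠ 1) :
    Units.map (f : A × K × K →* A × K × K) ≠ Units.map (middleProduct A K) := by
  intro h
  have hf {a : A} {b c : K} (ha : IsUnit a) (hb : IsUnit b) (hc : IsUnit c) :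
      f (a, b, c) = middleProduct A K (a, b, c) := by
    have hu : IsUnit (a, b, c) := Prod.isUnit_iff.2 ⟨ha, Prod.isUnit_iff.2 ⟨hb, hc⟩⟩
    simpa using MonoidHom.apply_of_units_map_eq h hu
  have hsum : ((1, 1, 1) + (1, ζ, ζ) : A × K × K) = (1, ζ, 1) + (1, 1, ζ) := by
    simp only [Prod.mk_add_mk, add_comm]
  have hmid : 1 + ζ * ζ = ζ + ζ := by
    have key := congrArg f hsum
    rw [map_add, map_add, hf isUnit_one isUnit_one isUnit_one, hf isUnit_one hζ hζ,
      hf isUnit_one hζ isUnit_one, hf isUnit_one isUnit_one hζ] at key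
    simpa [middleProduct] using congrArg (fun p => p.2.1) key
  have hsq : (ζ - 1) ^ 2 = 0 := by linear_combination hmid
  exact hζ₁ (sub_eq_zero.1 (IsReduced.eq_zero _ ⟨2, hsq⟩))

theorem C3xC3_not_fully_realizable :
    (¬ Function.Surjective
      (fun f : (GaloisField 2 2 × GaloisField 2 2) →+*
          (GaloisField 2 2 × GaloisField 2 2) =>
        (Units.map (f : (GaloisField 2 2 × GaloisField 2 2) →*
          (GaloisField 2 2 × GaloisField 2 2)) :
          (GaloisField 2 2 × GaloisField 2 2)ˣ →*
          (GaloisField 2 2 × GaloisField 2 2)ˣ))) ∧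
    (¬ Function.Surjective
      (fun f : (ZMod 2 × GaloisField 2 2 × GaloisField 2 2) →+*
          (ZMod 2 × GaloisField 2 2 × GaloisField 2 2) =>
        (Units.map (f : (ZMod 2 × GaloisField 2 2 × GaloisField 2 2) →*
          (ZMod 2 × GaloisField 2 2 × GaloisField 2 2)) :
          (ZMod 2 × GaloisField 2 2 × GaloisField 2 2)ˣ →*
          (ZMod 2 × GaloisField 2 2 × GaloisField 2 2)ˣ))) := by
  have hcard : 3 ≤ ENat.card (GaloisField 2 2) := by
    rw [ENat.card_eq_coe_natCard, GaloisField.card 2 2 two_ne_zero]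
    norm_num
  constructor
  · intro hsurj
    obtain ⟨f, hf⟩ := hsurj 1
    obtain ⟨ζ, hζ₀, hζ₁⟩ := ENat.exists_ne_ne_of_three_le hcard 0 (-1)
    have h1ζ : (1 : GaloisField 2 2) + ζ ≠ 0 := fun h => hζ₁ (eq_neg_of_add_eq_zero_right h)
    refine f.units_map_ne_one (u := (ζ, ζ)) ?_ ?_ hf
    · exact Prod.isUnit_iff.2 ⟨hζ₀.isUnit, hζ₀.isUnit⟩
    · exact Prod.isUnit_iff.2 ⟨h1ζ.isUnit, h1ζ.isUnit⟩
  · intro hsurj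
    obtain ⟨f, hf⟩ := hsurj (Units.map (middleProduct _ _))
    obtain ⟨ζ, hζ₀, hζ₁⟩ := ENat.exists_ne_ne_of_three_le hcard 0 1
    exact f.units_map_ne_units_map_middleProduct hζ₀.isUnit hζ₁ hf
end

section
/- Let R and S be rings of characteristic 2 such that every nonzero direct ring factor of S has a nontrivial unit group, and suppose there is a nontrivial group homomorphism φ : R^× → Z(S^×) (the center of the unit group of S). Then the group endomorphism ψ(u,v) = (u, φ(u)·v) of (R × S)^× = R^× × S^× is not induced by any ring endomorphism of R × S. -/
/-! If a ring endomorphism `F` of `R × S` induces `ψ`, then `F (1, φ u) = (1, φ u)` and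
`F (u, 1) = (u, φ u)`. Multiplying by the images of `(1, 0)` and `(0, 1)` shows that left
multiplication by `φ u` fixes the second coordinates of `F (1, 0)` and `F (0, 1)`; these sum
to `1`, so `φ u = 1`. -/

theorem RingHom.eq_one_of_snd_map_one_mk_of_snd_map_mk_one {R S T : Type*}
    [Semiring R] [Semiring S] [Semiring T]
    (F : R × S →+* T × S) {r : R} {w : S}
    (h_one_w : (F (1, w)).2 = w) (h_r_one : (F (r, 1)).2 = w) : w = 1 := by
  have hfst : w * (F (1, 0)).2 = (F (1, 0)).2 := by
    rw [← h_one_w, ← Prod.snd_mul, ← map_mul, Prod.mk_mul_mk, one_mul, mul_zero]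
  have hsnd : w * (F (0, 1)).2 = (F (0, 1)).2 := by
    rw [← h_r_one, ← Prod.snd_mul, ← map_mul, Prod.mk_mul_mk, mul_zero, one_mul]
  have hsum : (F (1, 0)).2 + (F (0, 1)).2 = 1 := by
    rw [← Prod.snd_add, ← map_add, Prod.mk_add_mk, add_zero, zero_add, Prod.mk_one_one, map_one,
      Prod.snd_one]
  calc w = w * ((F (1, 0)).2 + (F (0, 1)).2) := by rw [hsum, mul_one]
    _ = 1 := by rw [mul_add, hfst, hsnd, hsum]

theorem products_fail_general {R S : Type} [Ring R] [Ring S]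
    (φ : Rˣ →* Sˣ)
    (hnt : ∃ u : Rˣ, φ u ≠ 1) :
    ¬ ∃ F : R × S →+* R × S, ∀ (u : Rˣ) (v : Sˣ),
      F ((u : R), (v : S)) = ((u : R), ((φ u * v : Sˣ) : S)) := by
  rintro ⟨F, hF⟩
  obtain ⟨u, hu⟩ := hnt
  refine hu <| Units.ext <|
    RingHom.eq_one_of_snd_map_one_mk_of_snd_map_mk_one F (r := (u : R)) ?_ ?_
  · simpa using congrArg Prod.snd (hF 1 (φ u))
  · simpa using congrArg Prod.snd (hF u 1)

theorem products_fail {R S : Type} [Ring R] [Ring S] [CharP R 2] [CharP S 2]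
    (hS : ∀ (A B : Type) (_ : Ring A) (_ : Ring B) (_ : S ≃+* A × B),
      Nontrivial A → ∃ a : Aˣ, a ≠ 1)
    (φ : Rˣ →* Sˣ) (hcen : ∀ u : Rˣ, φ u ∈ Subgroup.center Sˣ)
    (hnt : ∃ u : Rˣ, φ u ≠ 1) :
    ¬ ∃ F : R × S →+* R × S, ∀ (u : Rˣ) (v : Sˣ),
      F ((u : R), (v : S)) = ((u : R), ((φ u * v : Sˣ) : S)) :=
  products_fail_general φ hnt
end

section
/- Let G be a direct sum of copies of C_2 indexed by a set K, with generators x_α, and let I ⊆ F_2[G] be the ideal generated by 1 + x_α + x_β + x_α x_β for all α, β ∈ K. Then the group of units of R = F_2[G]/I is exactly the image of G; i.e., R^× ≅ C_2^{(K)}. -/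
/-!
The relations `(1 + x_α)(1 + x_β) = 0` make `R` look like the trivial square-zero extension
`T = 𝔽₂ ⊕ (K →₀ 𝔽₂)`: `g ↦ 1 + g` is multiplicative into `T` because second components multiply
to zero, and it induces a ring map `R → T` that recovers `g` from `x_g` as the second component.
Conversely, modulo `I` we have `x_f = 1 + Σ fᵢ (1 + x_αᵢ)`, so every `r ∈ R` is
`c + Σ fᵢ (1 + x_αᵢ)`. The image of such an `r` in `T` has first component `c`, so a unit has
`c = 1`, that is `r = x_f`.
-/

open MonoidAlgebra TrivSqZeroExt

namespace TrivSqZeroExt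

variable {R M : Type*} [Semiring R] [AddCommMonoid M] [Module R M] [Module Rᵐᵒᵖ M]

def oneAddInrHom : Multiplicative M →* TrivSqZeroExt R M where
  toFun m := 1 + inr m.toAdd
  map_one' := by simp
  map_mul' a b := by simp [add_mul, mul_add, add_assoc]

theorem oneAddInrHom_apply (m : Multiplicative M) :
    oneAddInrHom m = (1 + inr m.toAdd : TrivSqZeroExt R M) :=
  rfl

theorem oneAddInrHom_injective :
    Function.Injective (oneAddInrHom : Multiplicative M →* TrivSqZeroExt R M) :=
  fun a b h => by simpa [oneAddInrHom_apply] using congrArg snd h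

end TrivSqZeroExt

theorem Finsupp.linearCombination_mul_linearCombination_of_mul_eq_zero {k A ι : Type*}
    [CommSemiring k] [Semiring A] [Algebra k A] {v : ι → A} (hv : ∀ i j, v i * v j = 0)
    (f g : ι →₀ k) : linearCombination k v f * linearCombination k v g = 0 := by
  simp [linearCombination_apply, Finsupp.sum_mul, Finsupp.mul_sum, hv]

namespace ElementaryAbelianTwoGroupAlgebra

noncomputable section

variable (K : Type*)

local notation "G" => Multiplicative (K →₀ ZMod 2)

def gen (α : K) : G := Multiplicative.ofAdd (Finsupp.single α 1)

def relIdeal : Ideal (MonoidAlgebra (ZMod 2) G) := Ideal.span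
  { z | ∃ α β : K,
      z = 1 + of (ZMod 2) G (gen K α) + of (ZMod 2) G (gen K β) +
          of (ZMod 2) G (gen K α) * of (ZMod 2) G (gen K β) }

local notation "R" => MonoidAlgebra (ZMod 2) G ⧸ relIdeal K

local notation "T" => TrivSqZeroExt (ZMod 2) (K →₀ ZMod 2)

local notation "mk" => Ideal.Quotient.mk (relIdeal K)

def toTrivSqZeroExt : MonoidAlgebra (ZMod 2) G →ₐ[ZMod 2] T :=
  MonoidAlgebra.lift (ZMod 2) T G oneAddInrHom

theorem toTrivSqZeroExt_of (g : G) : toTrivSqZeroExt K (of (ZMod 2) G g) = oneAddInrHom g :=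
  lift_of _ _

theorem toTrivSqZeroExt_one_add_of_gen (α : K) :
    toTrivSqZeroExt K (1 + of (ZMod 2) G (gen K α)) = inr (Finsupp.single α 1) := by
  rw [map_add, map_one, toTrivSqZeroExt_of, oneAddInrHom_apply, ← add_assoc,
    ZModModule.add_self, zero_add]
  rfl

theorem relIdeal_le_ker : relIdeal K ≤ RingHom.ker (toTrivSqZeroExt K) := by
  rw [relIdeal, Ideal.span_le]
  rintro _ ⟨α, β, rfl⟩
  have hfactor : 1 + of (ZMod 2) G (gen K α) + of (ZMod 2) G (gen K β) +
      of (ZMod 2) G (gen K α) * of (ZMod 2) G (gen K β) =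
      (1 + of (ZMod 2) G (gen K α)) * (1 + of (ZMod 2) G (gen K β)) := by ring
  rw [SetLike.mem_coe, RingHom.mem_ker, hfactor, map_mul, toTrivSqZeroExt_one_add_of_gen,
    toTrivSqZeroExt_one_add_of_gen, inr_mul_inr]

def quotToTrivSqZeroExt : R →ₐ[ZMod 2] T :=
  Ideal.Quotient.liftₐ (relIdeal K) (toTrivSqZeroExt K) (relIdeal_le_ker K)

theorem quotToTrivSqZeroExt_mk (z : MonoidAlgebra (ZMod 2) G) :
    quotToTrivSqZeroExt K (mk z) = toTrivSqZeroExt K z :=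
  rfl

def oneAddGen (α : K) : R := mk (1 + of (ZMod 2) G (gen K α))

theorem oneAddGen_mul_oneAddGen (α β : K) : oneAddGen K α * oneAddGen K β = 0 := by
  rw [oneAddGen, oneAddGen, ← map_mul, Ideal.Quotient.eq_zero_iff_mem]
  exact Ideal.subset_span ⟨α, β, by ring⟩

local notation "L" => Finsupp.linearCombination (ZMod 2) (oneAddGen K)

theorem mk_of_ofAdd (f : K →₀ ZMod 2) :
    mk (of (ZMod 2) G (Multiplicative.ofAdd f)) = 1 + L f := by
  induction f using Finsupp.induction_linear with
  | zero => rw [ofAdd_zero, map_one, map_one, map_zero, add_zero]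
  | add f g hf hg =>
    rw [ofAdd_add, map_mul, map_mul, hf, hg, map_add,
      ← add_zero (L f + L g), ← Finsupp.linearCombination_mul_linearCombination_of_mul_eq_zero
        (oneAddGen_mul_oneAddGen K) f g]
    ring
  | single α c =>
    obtain rfl | rfl : c = 0 ∨ c = 1 := by revert c; decide
    · rw [Finsupp.single_zero, ofAdd_zero, map_one, map_one, map_zero, add_zero]
    · rw [Finsupp.linearCombination_single, one_smul, oneAddGen, map_add, map_one, ← add_assoc,
        ZModModule.add_self, zero_add]
      rfl

theorem exists_eq_smul_one_add_linearCombination (r : R) :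
    ∃ (c : ZMod 2) (f : K →₀ ZMod 2), r = c • 1 + L f := by
  obtain ⟨z, rfl⟩ := Ideal.Quotient.mk_surjective r
  induction z using MonoidAlgebra.induction_on with
  | of g => exact ⟨1, g.toAdd, by rw [one_smul, ← mk_of_ofAdd]; rfl⟩
  | add a b ha hb =>
    obtain ⟨c, f, hcf⟩ := ha
    obtain ⟨d, g, hdg⟩ := hb
    exact ⟨c + d, f + g, by rw [map_add, hcf, hdg, map_add, add_smul]; abel⟩
  | smul d a ha =>
    obtain ⟨c, f, hcf⟩ := ha
    refine ⟨d * c, d • f, ?_⟩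
    rw [← Ideal.Quotient.mkₐ_eq_mk (ZMod 2), map_smul, Ideal.Quotient.mkₐ_eq_mk, hcf, map_smul,
      smul_add, smul_smul]

theorem quotToTrivSqZeroExt_linearCombination (f : K →₀ ZMod 2) :
    quotToTrivSqZeroExt K (L f) = inr f := by
  induction f using Finsupp.induction_linear with
  | zero => simp
  | add f g hf hg => rw [map_add, map_add, hf, hg, inr_add]
  | single α c =>
    rw [Finsupp.linearCombination_single, map_smul, oneAddGen, quotToTrivSqZeroExt_mk,
      toTrivSqZeroExt_one_add_of_gen, ← inr_smul, Finsupp.smul_single_one]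

theorem isUnit_iff_mem_range_mk_of (r : R) :
    IsUnit r ↔ r ∈ Set.range fun g : G => mk (of (ZMod 2) G g) := by
  constructor
  · intro hr
    obtain ⟨c, f, rfl⟩ := exists_eq_smul_one_add_linearCombination K r
    have hc : c = 1 := by
      simpa [quotToTrivSqZeroExt_linearCombination] using
        (isUnit_iff_isUnit_fst.mp (hr.map (quotToTrivSqZeroExt K))).eq_one
    exact ⟨Multiplicative.ofAdd f, (mk_of_ofAdd K f).trans (by rw [hc, one_smul])⟩
  · rintro ⟨g, rfl⟩
    exact (Group.isUnit g).map (((mk : _ →+* R) : _ →* R).comp (of (ZMod 2) G))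

def unitsHom : G →* Rˣ :=
  (Units.map (((mk : _ →+* R) : _ →* R).comp (of (ZMod 2) G))).comp toUnits.toMonoidHom

theorem coe_unitsHom (g : G) : (unitsHom K g : R) = mk (of (ZMod 2) G g) :=
  rfl

theorem unitsHom_injective : Function.Injective (unitsHom K) := by
  intro a b h
  apply (oneAddInrHom_injective : Function.Injective (oneAddInrHom : G →* T))
  rw [← toTrivSqZeroExt_of, ← toTrivSqZeroExt_of, ← quotToTrivSqZeroExt_mk,
    ← quotToTrivSqZeroExt_mk, ← coe_unitsHom, ← coe_unitsHom, h]

theorem unitsHom_surjective : Function.Surjective (unitsHom K) := by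
  intro u
  obtain ⟨g, hg⟩ := (isUnit_iff_mem_range_mk_of K u).mp u.isUnit
  exact ⟨g, Units.ext hg⟩

end

end ElementaryAbelianTwoGroupAlgebra

theorem units_of_quotient_of_elementary_abelian_two_group (K : Type*) :
    let G := Multiplicative (K →₀ ZMod 2)
    let x : K → G := fun α => Multiplicative.ofAdd (Finsupp.single α 1)
    let I : Ideal (MonoidAlgebra (ZMod 2) G) := Ideal.span
      { z | ∃ α β : K,
          z = 1 + of (ZMod 2) G (x α) + of (ZMod 2) G (x β) +
              of (ZMod 2) G (x α) * of (ZMod 2) G (x β) }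
    ({ r : MonoidAlgebra (ZMod 2) G ⧸ I | IsUnit r } =
      Set.range (fun g : G => Ideal.Quotient.mk I (of (ZMod 2) G g))) ∧
    Nonempty ((MonoidAlgebra (ZMod 2) G ⧸ I)ˣ ≃* G) := by
  intro G x I
  open ElementaryAbelianTwoGroupAlgebra in
  exact ⟨Set.ext (isUnit_iff_mem_range_mk_of K),
    ⟨(MulEquiv.ofBijective (unitsHom K) ⟨unitsHom_injective K, unitsHom_surjective K⟩).symm⟩⟩
end

section
/- If A is a group admitting a surjective homomorphism onto C_4, then A × C_4 is not fully realizable: for any ring R of characteristic 2 whose unit group is (isomorphic to) A × C_4 and which is generated by its units, not every group endomorphism of A × C_4 is induced by a ring endomorphism of R. -/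
/-!
Write `C = Multiplicative (ZMod 4)`, let `u ∈ Rˣ` correspond to a generator `(1, c)` of the
factor `C` and `w` to some `(a, 1)` with `h a = c`. Lifting the endomorphism `(a, x) ↦ (a, h a)`
gives a ring endomorphism `f` with `f u = 1` whose "unit kernel" `{x ∈ Rˣ | f x = 1}` is exactly
the factor `C = ⟨u⟩`; lifting `(a, x) ↦ (a, h a * x)` gives a ring endomorphism `g` fixing `u`
and sending `w` to `w u`.

Put `T = 1 + u²`. In characteristic `2`, `T² = 1 + u⁴ = 0`, so `1 + T w` squares to `1`; it is
killed by `f`, hence lies in `⟨u⟩`, and being `≠ 1` it must be `u²`, i.e. `T w = T`. Then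
`y = 1 + (1 + u) w` satisfies `y² = 1 + T w² = u²`, so `y` is a unit killed by `f`, hence a power
of `u` and fixed by `g`. But `g y = 1 + (1 + u) w u`, and `g y = y` forces `T w = 0`, so `T = 0`,
contradicting `u² ≠ 1`.
-/

theorem pow_eq_one_or_eq_sq_of_sq_eq_one {M : Type*} [Monoid M] {u : M} (hu4 : u ^ 4 = 1)
    (hu2 : u ^ 2 ≠ 1) {n : ℕ} (h : (u ^ n) ^ 2 = 1) : u ^ n = 1 ∨ u ^ n = u ^ 2 := by
  rw [← Nat.mod_add_div n 4, pow_add, pow_mul, hu4, one_pow, mul_one] at h ⊢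
  have hn : n % 4 < 4 := Nat.mod_lt n (by norm_num)
  interval_cases n % 4
  · exact .inl (pow_zero u)
  · exact absurd (by simpa using h) hu2
  · exact .inr rfl
  · refine absurd ?_ hu2
    rw [← pow_mul, show 3 * 2 = 4 + 2 by rfl, pow_add, hu4, one_mul] at h
    exact h

section CharTwo

variable {R : Type*} [Ring R] [CharP R 2]

theorem one_add_sq_of_charTwo (x : R) : (1 + x) ^ 2 = 1 + x ^ 2 := by
  rw [add_pow_char_of_commute 2 (Commute.one_left x), one_pow]

theorem one_add_ne_zero_of_charTwo {x : R} (hx : x ≠ 1) : 1 + x ≠ 0 :=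
  fun h => hx (CharTwo.add_eq_zero.mp h).symm

theorem one_add_sq_sq_eq_zero {u : R} (hu4 : u ^ 4 = 1) : (1 + u ^ 2) ^ 2 = 0 := by
  rw [one_add_sq_of_charTwo, ← pow_mul, hu4, CharTwo.add_self_eq_zero]

theorem one_add_sq_mul_eq_self {u : R} {f : R →+* R} (hu4 : u ^ 4 = 1) (hu2 : u ^ 2 ≠ 1)
    (hfu : f u = 1) (hker : ∀ x : Rˣ, f x = 1 → ∃ n : ℕ, (x : R) = u ^ n)
    {v : Rˣ} (huv : Commute u v) : (1 + u ^ 2) * v = 1 + u ^ 2 := by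
  set T := 1 + u ^ 2
  have hTv : Commute T v := (Commute.one_left _).add_left (huv.pow_left 2)
  have hσ : (1 + T * v) ^ 2 = 1 := by
    rw [one_add_sq_of_charTwo, hTv.mul_pow, one_add_sq_sq_eq_zero hu4, zero_mul, add_zero]
  obtain ⟨σ, hσv⟩ : IsUnit (1 + T * v) := (isUnit_pow_iff two_ne_zero).mp (by rw [hσ]; exact isUnit_one)
  have hfσ : f σ = 1 := by
    simp only [hσv, T, map_add, map_mul, map_one, map_pow, hfu, one_pow,
      CharTwo.add_self_eq_zero, zero_mul, add_zero]
  obtain ⟨n, hn⟩ := hker σ hfσ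
  rcases pow_eq_one_or_eq_sq_of_sq_eq_one hu4 hu2 (hn ▸ hσv ▸ hσ) with hσ1 | hσu
  · have hTv0 : T * v = 0 := by rwa [← hn, hσv, add_eq_left] at hσ1
    exact absurd ((Units.mul_left_eq_zero v).mp hTv0) (one_add_ne_zero_of_charTwo hu2)
  · rw [← hn, hσv] at hσu
    rw [eq_sub_of_add_eq' hσu, CharTwo.sub_eq_add, add_comm]

theorem not_exists_ringHom_fix_and_map_eq_mul {u : R} {f : R →+* R} (hu4 : u ^ 4 = 1)
    (hu2 : u ^ 2 ≠ 1) (hfu : f u = 1) (hker : ∀ x : Rˣ, f x = 1 → ∃ n : ℕ, (x : R) = u ^ n)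
    {w : Rˣ} (huw : Commute u w) : ¬ ∃ g : R →+* R, g u = u ∧ g w = w * u := by
  rintro ⟨g, hgu, hgw⟩
  have hTw := one_add_sq_mul_eq_self hu4 hu2 hfu hker huw
  have hcomm : Commute (1 + u) w := (Commute.one_left _).add_left huw
  have hy : (1 + (1 + u) * w) ^ 2 = u ^ 2 := by
    rw [one_add_sq_of_charTwo, hcomm.mul_pow, one_add_sq_of_charTwo, sq (w : R), ← mul_assoc,
      hTw, hTw, ← add_assoc, CharTwo.add_self_eq_zero, zero_add]
  obtain ⟨y, hyv⟩ : IsUnit (1 + (1 + u) * w) :=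
    (isUnit_pow_iff two_ne_zero).mp (by rw [hy]; exact (IsUnit.of_pow_eq_one hu4 four_ne_zero).pow 2)
  obtain ⟨n, hn⟩ := hker y (by
    simp only [hyv, map_add, map_mul, map_one, hfu, CharTwo.add_self_eq_zero, zero_mul, add_zero])
  have hgy : g y = y := by rw [hn, map_pow, hgu]
  rw [hyv, map_add, map_one, map_mul, map_add, map_one, hgu, hgw, add_right_inj] at hgy
  have hTw0 : (1 + u ^ 2) * w = 0 :=
    calc (1 + u ^ 2) * w = (1 + u) * (w * (1 + u)) := by
          rw [← one_add_sq_of_charTwo, sq, mul_assoc, hcomm.eq]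
      _ = (1 + u) * w + (1 + u) * (w * u) := by rw [mul_add, mul_one, mul_add]
      _ = 0 := by rw [hgy, CharTwo.add_self_eq_zero]
  exact one_add_ne_zero_of_charTwo hu2 (hTw ▸ hTw0)

end CharTwo

theorem exists_ringHom_lift_of_surjective_unitsMap {R G : Type*} [Ring R] [Monoid G] (e : Rˣ ≃* G)
    (hs : Function.Surjective fun f : R →+* R => (Units.map (f : R →* R) : Rˣ →* Rˣ))
    (φ : G →* G) : ∃ f : R →+* R, ∀ x : Rˣ, f x = (e.symm (φ (e x)) : R) := by
  obtain ⟨f, hf⟩ := hs (e.symm.toMonoidHom.comp (φ.comp e.toMonoidHom))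
  exact ⟨f, fun x => by simpa using congrArg (fun F : Rˣ →* Rˣ => (F x : R)) hf⟩

section Endomorphisms

variable {A C : Type*} [Monoid A]

def graphEnd [Monoid C] (h : A →* C) : A × C →* A × C :=
  (MonoidHom.fst A C).prod (h.comp (MonoidHom.fst A C))

def shearEnd [CommMonoid C] (h : A →* C) : A × C →* A × C :=
  (MonoidHom.fst A C).prod (h.comp (MonoidHom.fst A C) * MonoidHom.snd A C)

@[simp]
theorem graphEnd_apply [Monoid C] (h : A →* C) (p : A × C) :
    graphEnd h p = (p.1, h p.1) := rfl

@[simp]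
theorem shearEnd_apply [CommMonoid C] (h : A →* C) (p : A × C) :
    shearEnd h p = (p.1, h p.1 * p.2) := rfl

end Endomorphisms

theorem Multiplicative.eq_ofAdd_one_pow_val {n : ℕ} [NeZero n] (c : Multiplicative (ZMod n)) :
    c = Multiplicative.ofAdd 1 ^ (Multiplicative.toAdd c).val := by
  rw [← ofAdd_nsmul, nsmul_one, ZMod.natCast_zmod_val]
  rfl

theorem exists_val_eq_pow_of_graphEnd {R A : Type*} [Ring R] [Monoid A] {n : ℕ} [NeZero n]
    (h : A →* Multiplicative (ZMod n)) (e : Rˣ ≃* A × Multiplicative (ZMod n)) {f : R →+* R}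
    (hf : ∀ x : Rˣ, f x = (e.symm (graphEnd h (e x)) : R)) (x : Rˣ) (hx : f x = 1) :
    ∃ k : ℕ, (x : R) = (e.symm (1, Multiplicative.ofAdd 1) : R) ^ k := by
  have hx1 : (e x).1 = 1 := by
    have : e.symm (graphEnd h (e x)) = 1 := Units.ext (by rw [← hf, hx, Units.val_one])
    rw [MulEquiv.map_eq_one_iff, graphEnd_apply, Prod.mk_eq_one] at this
    exact this.1
  refine ⟨(Multiplicative.toAdd (e x).2).val, ?_⟩
  rw [← Units.val_pow_eq_pow_val, ← map_pow, Prod.pow_mk, one_pow,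
    ← Multiplicative.eq_ofAdd_one_pow_val, ← hx1, Prod.mk.eta, e.symm_apply_apply]

theorem A_times_C4_not_fully_realizable_general {A : Type} [Group A]
    (h : A →* Multiplicative (ZMod 4)) (hsurj : Function.Surjective h)
    (R : Type) [Ring R] [CharP R 2]
    (e : Rˣ ≃* A × Multiplicative (ZMod 4)) :
    ¬ Function.Surjective
      (fun f : R →+* R => (Units.map (f : R →* R) : Rˣ →* Rˣ)) := by
  intro hs
  set c : Multiplicative (ZMod 4) := Multiplicative.ofAdd 1
  have hc4 : c ^ 4 = 1 := by decide
  have hc2 : c ^ 2 ≠ 1 := by decide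
  obtain ⟨a, ha⟩ := hsurj c
  obtain ⟨f, hf⟩ := exists_ringHom_lift_of_surjective_unitsMap e hs (graphEnd h)
  obtain ⟨g, hg⟩ := exists_ringHom_lift_of_surjective_unitsMap e hs (shearEnd h)
  have hu_pow (k : ℕ) : (e.symm (1, c) : R) ^ k = e.symm (1, c ^ k) := by
    rw [← Units.val_pow_eq_pow_val, ← map_pow, Prod.pow_mk, one_pow]
  refine not_exists_ringHom_fix_and_map_eq_mul (u := (e.symm (1, c) : R)) (w := e.symm (a, 1))
    ?_ ?_ ?_ (exists_val_eq_pow_of_graphEnd h e hf) ?_ ⟨g, ?_, ?_⟩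
  · rw [hu_pow, hc4]
    simp
  · rw [hu_pow, Ne, Units.val_eq_one, MulEquiv.map_eq_one_iff, Prod.mk_eq_one]
    exact fun h2 => hc2 h2.2
  · rw [hf]
    simp
  · exact ((Prod.commute_iff.mpr ⟨Commute.one_left a, Commute.all c 1⟩).map e.symm).units_val
  · rw [hg]
    simp
  · rw [hg, ← Units.val_mul, ← map_mul]
    simp [ha]

theorem A_times_C4_not_fully_realizable {A : Type} [Group A]
    (h : A →* Multiplicative (ZMod 4)) (hsurj : Function.Surjective h)
    (R : Type) [Ring R] [CharP R 2]
    (hgen : Subring.closure { r : R | IsUnit r } = ⊤)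
    (e : Rˣ ≃* A × Multiplicative (ZMod 4)) :
    ¬ Function.Surjective
      (fun f : R →+* R => (Units.map (f : R →* R) : Rˣ →* Rˣ)) :=
  A_times_C4_not_fully_realizable_general h hsurj R e
end
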